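/- For every integer n ≥ 1, the number of Catalan words of length n avoiding the vincular pattern 2-31 equals L_n, the number of Motzkin left-factors with n−1 steps. -/
import Mathlib


/-- A Catalan word: a word of positive integers starting with 1 in which each
letter exceeds its predecessor by at most 1. -/
def IsCatalanWord {n : ℕ} (w : Fin n → ℕ) : Prop :=
  (∀ i, 1 ≤ w i) ∧ (∀ h : 0 < n, w ⟨0, h⟩ = 1) ∧
  ∀ i : ℕ, ∀ h : i + 1 < n, w ⟨i + 1, h⟩ ≤ w ⟨i, by omega⟩ + 1

/-- `w` contains the vincular pattern 2-31: there are indices `i < j` with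
`w (j+1) < w i < w j`. -/
def Contains2_31 {n : ℕ} (w : Fin n → ℕ) : Prop :=
  ∃ i j : ℕ, ∃ hj : j + 1 < n, ∃ hij : i < j,
    w ⟨j + 1, hj⟩ < w ⟨i, by omega⟩ ∧ w ⟨i, by omega⟩ < w ⟨j, by omega⟩

/-- `L n`: the number of Motzkin left-factors with `n - 1` steps, i.e. sequences
of `n - 1` steps in `{-1, 0, 1}` with all partial sums nonnegative (A005773). -/
noncomputable def motzkinLeftFactors (n : ℕ) : ℕ :=
  Set.ncard {s : Fin (n - 1) → ℤ | (∀ i, s i = -1 ∨ s i = 0 ∨ s i = 1) ∧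
    ∀ j, 0 ≤ ∑ i ∈ Finset.Iic j, s i}

/-- intermediate value: a Catalan word hits every value between 1 and w j by time j -/
lemma catalan_ivt {n : ℕ} (w : Fin n → ℕ) (hw : IsCatalanWord w) :
    ∀ j (hj : j < n) v, 1 ≤ v → v ≤ w ⟨j, hj⟩ →
      ∃ i, ∃ hi : i ≤ j, w ⟨i, by omega⟩ = v := by
  intro j
  induction j with
  | zero =>
    intro hj v h1 h2
    exact ⟨0, le_refl 0, by have := hw.2.1 hj; omega⟩
  | succ k ih =>
    intro hj v h1 h2
    have hk : k < n := by omega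
    by_cases hv : v ≤ w ⟨k, hk⟩
    · obtain ⟨i, hi, he⟩ := ih hk v h1 hv
      exact ⟨i, by omega, he⟩
    · have hs := hw.2.2 k hj
      refine ⟨k + 1, le_refl _, by omega⟩

lemma avoid_iff {n : ℕ} (w : Fin n → ℕ) (hw : IsCatalanWord w) :
    ¬ Contains2_31 w ↔ ∀ j (h : j + 1 < n), w ⟨j, by omega⟩ ≤ w ⟨j + 1, h⟩ + 1 := by
  constructor
  · intro hc j h
    by_contra hlt
    push_neg at hlt
    apply hc
    have h2 : 2 ≤ w ⟨j, by omega⟩ := by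
      have := hw.1 ⟨j + 1, h⟩; omega
    obtain ⟨i, hi, he⟩ := catalan_ivt w hw j (by omega) (w ⟨j, by omega⟩ - 1)
      (by omega) (by omega)
    have hij : i < j := by
      rcases Nat.lt_or_ge i j with h' | h'
      · exact h'
      · exfalso
        have : i = j := by omega
        subst this
        omega
    exact ⟨i, j, h, hij, by omega, by omega⟩
  · rintro hstep ⟨i, j, hj, hij, h1, h2⟩
    have := hstep j hj
    omega

def stepMap (n : ℕ) (w : Fin n → ℕ) (i : Fin (n - 1)) : ℤ :=
  (w ⟨i.val + 1, by have := i.isLt; omega⟩ : ℤ) - (w ⟨i.val, by have := i.isLt; omega⟩ : ℤ)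

lemma sum_Iic_step {n : ℕ} (w : Fin n → ℕ) (k : ℕ) (hk : k < n - 1) :
    ∑ i ∈ Finset.Iic (⟨k, hk⟩ : Fin (n - 1)), stepMap n w i
      = (w ⟨k + 1, by omega⟩ : ℤ) - (w ⟨0, by omega⟩ : ℤ) := by
  induction k with
  | zero =>
    have : Finset.Iic (⟨0, hk⟩ : Fin (n - 1)) = {⟨0, hk⟩} := by
      ext x; simp only [Finset.mem_Iic, Fin.le_def, Finset.mem_insert,
        Finset.mem_singleton, Fin.ext_iff]; omega
    rw [this, Finset.sum_singleton]
    rfl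
  | succ k ih =>
    have hk' : k < n - 1 := by omega
    have hins : Finset.Iic (⟨k + 1, hk⟩ : Fin (n - 1))
        = insert ⟨k + 1, hk⟩ (Finset.Iic ⟨k, hk'⟩) := by
      ext x; simp only [Finset.mem_Iic, Fin.le_def, Finset.mem_insert,
        Finset.mem_singleton, Fin.ext_iff]; omega
    rw [hins, Finset.sum_insert (by simp [Finset.mem_Iic, Fin.le_def, Fin.ext_iff]),
      ih hk']
    show (w ⟨k + 2, by omega⟩ : ℤ) - (w ⟨k + 1, by omega⟩ : ℤ) + _ = _
    ring

lemma sum_range_eq_Iic {m : ℕ} (s : Fin m → ℤ) (k : ℕ) (hk : k < m) :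
    ∑ i ∈ Finset.range (k + 1), (if h : i < m then s ⟨i, h⟩ else 0)
      = ∑ i ∈ Finset.Iic (⟨k, hk⟩ : Fin m), s i := by
  induction k with
  | zero =>
    have : Finset.Iic (⟨0, hk⟩ : Fin m) = {⟨0, hk⟩} := by
      ext x; simp only [Finset.mem_Iic, Fin.le_def, Finset.mem_insert,
        Finset.mem_singleton, Fin.ext_iff]; omega
    rw [this, Finset.sum_singleton]
    simp [hk]
  | succ k ih =>
    have hk' : k < m := by omega
    have hins : Finset.Iic (⟨k + 1, hk⟩ : Fin m)
        = insert ⟨k + 1, hk⟩ (Finset.Iic ⟨k, hk'⟩) := by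
      ext x; simp only [Finset.mem_Iic, Fin.le_def, Finset.mem_insert,
        Finset.mem_singleton, Fin.ext_iff]; omega
    rw [Finset.sum_range_succ, ih hk', hins,
      Finset.sum_insert (by simp [Finset.mem_Iic, Fin.le_def, Fin.ext_iff])]
    rw [dif_pos hk]
    ring

theorem catalan_avoid_2_31 (n : ℕ) (hn : 1 ≤ n) :
    Set.ncard {w : Fin n → ℕ | IsCatalanWord w ∧ ¬ Contains2_31 w} =
      motzkinLeftFactors n := by
  set A := {w : Fin n → ℕ | IsCatalanWord w ∧ ¬ Contains2_31 w} with hA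
  set B := {s : Fin (n - 1) → ℤ | (∀ i, s i = -1 ∨ s i = 0 ∨ s i = 1) ∧
    ∀ j, 0 ≤ ∑ i ∈ Finset.Iic j, s i} with hB
  have hmaps : Set.MapsTo (stepMap n) A B := by
    rintro w ⟨hw, hav⟩
    have hstep := (avoid_iff w hw).mp hav
    constructor
    · intro i
      have h1 := hw.2.2 i.val (by have := i.isLt; omega)
      have h2 := hstep i.val (by have := i.isLt; omega)
      simp only [stepMap]
      omega
    · intro j
      have hj := j.isLt
      have : j = ⟨j.val, hj⟩ := rfl
      rw [this, sum_Iic_step w j.val hj]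
      have := hw.1 ⟨j.val + 1, by omega⟩
      have h0 := hw.2.1 (by omega)
      omega
  have hinj : Set.InjOn (stepMap n) A := by
    rintro w ⟨hw, _⟩ w' ⟨hw', _⟩ heq
    funext k
    obtain ⟨k, hk⟩ := k
    induction k with
    | zero => rw [hw.2.1 (by omega), hw'.2.1 (by omega)]
    | succ k ih =>
      have hk' : k < n := by omega
      have := congrFun heq ⟨k, by omega⟩
      simp only [stepMap] at this
      have hkk := ih hk'
      omega
  have hsurj : Set.SurjOn (stepMap n) A B := by
    rintro s ⟨hs1, hs2⟩
    set sext : ℕ → ℤ := fun i => if h : i < n - 1 then s ⟨i, h⟩ else 0 with hsext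
    set P : ℕ → ℤ := fun k => ∑ i ∈ Finset.range k, sext i with hP
    have hPnn : ∀ k, k ≤ n - 1 → 0 ≤ P k := by
      intro k hk
      rcases Nat.eq_zero_or_pos k with h | h
      · subst h; simp [hP]
      · have hk1 : k - 1 < n - 1 := by omega
        have := sum_range_eq_Iic s (k - 1) hk1
        have hke : k - 1 + 1 = k := by omega
        rw [hke] at this
        rw [hP]
        simp only [hsext]
        rw [this]
        exact hs2 _
    set w : Fin n → ℕ := fun k => (1 + P k.val).toNat with hw
    have hwval : ∀ k (hk : k < n), (w ⟨k, hk⟩ : ℤ) = 1 + P k := by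
      intro k hk
      have h1 : 0 ≤ P k := hPnn k (by omega)
      simp only [hw]
      omega
    have hstep : ∀ k (hk : k < n - 1), P (k + 1) = P k + s ⟨k, hk⟩ := by
      intro k hk
      simp only [hP, Finset.sum_range_succ, hsext, dif_pos hk]
    have hcat : IsCatalanWord w := by
      refine ⟨?_, ?_, ?_⟩
      · intro i
        have := hwval i.val i.isLt
        have h1 : 0 ≤ P i.val := hPnn i.val (by have := i.isLt; omega)
        have : w ⟨i.val, i.isLt⟩ = w i := rfl
        omega
      · intro h
        have := hwval 0 h
        simp [hP] at this
        omega
      · intro i h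
        have h1 := hwval i (by omega)
        have h2 := hwval (i + 1) h
        have h3 := hstep i (by omega)
        rcases hs1 ⟨i, by omega⟩ with h4 | h4 | h4 <;> omega
    have havd : ¬ Contains2_31 w := by
      rw [avoid_iff w hcat]
      intro j h
      have h1 := hwval j (by omega)
      have h2 := hwval (j + 1) h
      have h3 := hstep j (by omega)
      rcases hs1 ⟨j, by omega⟩ with h4 | h4 | h4 <;> omega
    refine ⟨w, ⟨hcat, havd⟩, ?_⟩
    funext i
    have hi := i.isLt
    have h1 := hwval i.val (by omega)
    have h2 := hwval (i.val + 1) (by omega)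
    have h3 := hstep i.val hi
    simp only [stepMap]
    have : (⟨i.val, hi⟩ : Fin (n - 1)) = i := rfl
    rw [this] at h3
    omega
  have hbij : Set.BijOn (stepMap n) A B := ⟨hmaps, hinj, hsurj⟩
  rw [motzkinLeftFactors, ← hB, ← hbij.image_eq, Set.ncard_image_of_injOn hinj]
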